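/- arXiv:2205.02770 — 4 statements merged into one kernel-verified Lean document; each statement's English description precedes it below -/
import Mathlib

section
/- Let H be a real or complex inner product space, x ∈ H, and e₁, …, e_n ∈ H unit vectors. Then ∑ₖ |⟨x, eₖ⟩|² ≤ ‖x‖² + ∑_{k ≠ l} |⟨x, eₖ⟩| · |⟨x, e_l⟩| · |⟨eₖ, e_l⟩|. -/
open Finset

theorem stmt_4 {𝕜 : Type*} [RCLike 𝕜] {H : Type*} [NormedAddCommGroup H]
    [InnerProductSpace 𝕜 H] (x : H) (n : ℕ) (e : Fin n → H)
    (he : ∀ k, ‖e k‖ = 1) :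
    ∑ k, ‖(inner 𝕜 x (e k) : 𝕜)‖ ^ 2 ≤
      ‖x‖ ^ 2 + ∑ k, ∑ l ∈ univ \ {k},
        ‖(inner 𝕜 x (e k) : 𝕜)‖ * ‖(inner 𝕜 x (e l) : 𝕜)‖ * ‖(inner 𝕜 (e k) (e l) : 𝕜)‖ := by
  set c : Fin n → 𝕜 := fun k => inner 𝕜 (e k) x with hc
  set y : H := ∑ k, c k • e k with hy
  have hnc : ∀ k, ‖c k‖ = ‖(inner 𝕜 x (e k) : 𝕜)‖ := fun k => norm_inner_symm _ _
  have hxy : RCLike.re (inner 𝕜 x y : 𝕜) = ∑ k, ‖(inner 𝕜 x (e k) : 𝕜)‖ ^ 2 := by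
    rw [hy, inner_sum, map_sum]
    refine Finset.sum_congr rfl fun k _ => ?_
    rw [inner_smul_right,
      show c k = starRingEnd 𝕜 (inner 𝕜 x (e k)) from (inner_conj_symm (e k) x).symm,
      RCLike.conj_mul]
    norm_cast
  have hyy : RCLike.re (inner 𝕜 y y : 𝕜)
      = ∑ k, ∑ l, RCLike.re (starRingEnd 𝕜 (c k) * (c l * (inner 𝕜 (e k) (e l) : 𝕜))) := by
    rw [hy, sum_inner, map_sum]
    refine Finset.sum_congr rfl fun k _ => ?_
    rw [inner_smul_left, inner_sum, Finset.mul_sum, map_sum]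
    refine Finset.sum_congr rfl fun l _ => ?_
    rw [inner_smul_right]
  have hdiag : ∀ k : Fin n,
      RCLike.re (starRingEnd 𝕜 (c k) * (c k * (inner 𝕜 (e k) (e k) : 𝕜))) = ‖c k‖ ^ 2 := by
    intro k
    have : (inner 𝕜 (e k) (e k) : 𝕜) = 1 := by
      rw [inner_self_eq_norm_sq_to_K, he k]; norm_num
    rw [this, mul_one, RCLike.conj_mul]
    norm_cast
  have hoff : ∀ k : Fin n, ∀ l ∈ univ \ {k},
      RCLike.re (starRingEnd 𝕜 (c k) * (c l * (inner 𝕜 (e k) (e l) : 𝕜)))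
        ≤ ‖(inner 𝕜 x (e k) : 𝕜)‖ * ‖(inner 𝕜 x (e l) : 𝕜)‖ * ‖(inner 𝕜 (e k) (e l) : 𝕜)‖ := by
    intro k l _
    calc RCLike.re (starRingEnd 𝕜 (c k) * (c l * (inner 𝕜 (e k) (e l) : 𝕜)))
        ≤ ‖starRingEnd 𝕜 (c k) * (c l * (inner 𝕜 (e k) (e l) : 𝕜))‖ := RCLike.re_le_norm _
      _ = ‖(inner 𝕜 x (e k) : 𝕜)‖ * ‖(inner 𝕜 x (e l) : 𝕜)‖ * ‖(inner 𝕜 (e k) (e l) : 𝕜)‖ := by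
          rw [norm_mul, norm_mul, RCLike.norm_conj, hnc k, hnc l, mul_assoc]
  have hyy_le : RCLike.re (inner 𝕜 y y : 𝕜)
      ≤ ∑ k, ‖c k‖ ^ 2 + ∑ k, ∑ l ∈ univ \ {k},
        ‖(inner 𝕜 x (e k) : 𝕜)‖ * ‖(inner 𝕜 x (e l) : 𝕜)‖ * ‖(inner 𝕜 (e k) (e l) : 𝕜)‖ := by
    rw [hyy, ← Finset.sum_add_distrib]
    refine Finset.sum_le_sum fun k _ => ?_
    rw [Finset.sum_eq_sum_sdiff_singleton_add (Finset.mem_univ k)]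
    rw [hdiag k, add_comm]
    gcongr with l hl
    exact hoff k l hl
  have hsq : (0:ℝ) ≤ ‖x - y‖ ^ 2 := sq_nonneg _
  rw [@norm_sub_sq 𝕜] at hsq
  have hny : ‖y‖ ^ 2 = RCLike.re (inner 𝕜 y y : 𝕜) := (inner_self_eq_norm_sq (𝕜 := 𝕜) y).symm
  have hcsum : ∑ k, ‖c k‖ ^ 2 = ∑ k, ‖(inner 𝕜 x (e k) : 𝕜)‖ ^ 2 :=
    Finset.sum_congr rfl fun k _ => by rw [hnc k]
  rw [hny, hxy] at hsq
  rw [hcsum] at hyy_le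
  linarith
end

section
/- Let P₁, …, P₆ ⊂ ℝᵈ be finite δ-separated sets, δ ∈ (0,1], and let μ₁, …, μ₆ : ℝᵈ → ℝ be smooth compactly supported functions with 0 ≤ μⱼ ≤ 1 and supp μⱼ contained in the δ-neighborhood of Pⱼ. Then ∫ μ̂₁ μ̂₂ μ̂₃ · conj(μ̂₄ μ̂₅ μ̂₆) ≤ K·δ^{5d} · #{(x₁,…,x₆) ∈ P₁×⋯×P₆ : |(x₁+x₂+x₃) − (x₄+x₅+x₆)| ≤ 6δ} for a constant K depending only on d. -/
open MeasureTheory Real Set Metric Function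
open scoped FourierTransform Convolution RealInnerProductSpace ComplexConjugate

noncomputable section AuxSect

variable {d : ℕ}

local notation "𝕍" => EuclideanSpace ℝ (Fin d)

/-- A smooth compactly supported function is a Schwartz map. -/
def toSchwartz (f : 𝕍 → ℂ) (h1 : ContDiff ℝ ((⊤ : ℕ∞) : WithTop ℕ∞) f) (h2 : HasCompactSupport f) : SchwartzMap 𝕍 ℂ where
  toFun := f
  smooth' := h1
  decay' := by
    intro k n
    have hc : Continuous fun x : 𝕍 => ‖x‖ ^ k * ‖iteratedFDeriv ℝ n f x‖ := by
      have h := (h1.continuous_iteratedFDeriv (by exact_mod_cast le_top : ((n:ℕ∞) : WithTop ℕ∞) ≤ ((⊤ : ℕ∞) : WithTop ℕ∞))).norm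
      exact (continuous_norm.pow k).mul h
    have hs : HasCompactSupport fun x : 𝕍 => ‖x‖ ^ k * ‖iteratedFDeriv ℝ n f x‖ := by
      exact ((h2.iteratedFDeriv n).norm).mul_left
    obtain ⟨C, hC⟩ := hc.bounded_above_of_compact_support hs
    exact ⟨C, fun x => (Real.le_norm_self _).trans (hC x)⟩

lemma integrable_fourier_of_compact (f : 𝕍 → ℂ) (h1 : ContDiff ℝ ((⊤ : ℕ∞) : WithTop ℕ∞) f)
    (h2 : HasCompactSupport f) : Integrable (𝓕 f) := by
  have : 𝓕 f = (SchwartzMap.fourierTransformCLM ℂ (toSchwartz f h1 h2) : 𝕍 → ℂ) := by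
    simp [SchwartzMap.fourierTransformCLM_apply]; rfl
  rw [this]
  exact SchwartzMap.integrable _

 
lemma integrable_conj' {h : 𝕍 → ℂ} (hh : Integrable h) :
    Integrable (fun x => conj (h x)) := by
  refine ⟨?_, ?_⟩
  · exact RCLike.continuous_conj.comp_aestronglyMeasurable hh.1
  · simpa [HasFiniteIntegral] using hh.2

lemma fourier_conv (f g : 𝕍 → ℂ) (hfc : Continuous f) (hgc : Continuous g)
    (hfs : HasCompactSupport f) (hgs : HasCompactSupport g) (ξ : 𝕍) :
    𝓕 (f ⋆[ContinuousLinearMap.mul ℝ ℂ] g) ξ = 𝓕 f ξ * 𝓕 g ξ := by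
  set c : 𝕍 → ℂ := fun v => Complex.exp (↑(-2 * π * ⟪v, ξ⟫) * Complex.I) with hc
  have hcc : Continuous c := by
    apply Complex.continuous_exp.comp
    exact (Complex.continuous_ofReal.comp
      (continuous_const.mul (continuous_id.inner continuous_const))).mul continuous_const
  have hadd : ∀ v w : 𝕍, c (v + w) = c v * c w := by
    intro v w
    rw [hc, ← Complex.exp_add]
    simp only
    congr 1
    push_cast [inner_add_left]
    ring
  have hFT : ∀ h : 𝕍 → ℂ, 𝓕 h ξ = ∫ v, c v * h v := by
    intro h
    rw [Real.fourier_eq']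
    simp [hc, smul_eq_mul]
  have hint : Integrable (fun p : 𝕍 × 𝕍 => c p.1 * (f p.2 * g (p.1 - p.2))) := by
    apply Continuous.integrable_of_hasCompactSupport
    · fun_prop
    · apply HasCompactSupport.intro
        ((hgs.isCompact.add hfs.isCompact).prod hfs.isCompact)
      intro p hp
      by_cases h2 : f p.2 = 0
      · simp [h2]
      by_cases h1 : g (p.1 - p.2) = 0
      · simp [h1]
      exfalso
      apply hp
      constructor
      · have : p.1 = (p.1 - p.2) + p.2 := by abel
        rw [this]
        exact Set.add_mem_add (subset_tsupport _ h1) (subset_tsupport _ h2)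
      · exact subset_tsupport _ h2
  calc 𝓕 (f ⋆[ContinuousLinearMap.mul ℝ ℂ] g) ξ
      = ∫ x, c x * ∫ t, f t * g (x - t) := by
        rw [hFT]
        rfl
    _ = ∫ x, ∫ t, c x * (f t * g (x - t)) := by
        congr 1
        ext x
        rw [integral_const_mul]
    _ = ∫ t, ∫ x, c x * (f t * g (x - t)) := integral_integral_swap hint
    _ = ∫ t, ∫ x, c (x + t) * (f t * g x) := by
        congr 1
        ext t
        rw [← integral_add_right_eq_self (fun x => c x * (f t * g (x - t))) t]
        simp
    _ = ∫ t, (c t * f t) * ∫ x, c x * g x := by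
        congr 1
        ext t
        rw [← integral_const_mul]
        congr 1
        ext x
        rw [hadd]
        ring
    _ = (∫ t, c t * f t) * ∫ x, c x * g x := integral_mul_const _ _
    _ = 𝓕 f ξ * 𝓕 g ξ := by rw [hFT, hFT]

lemma parseval (f g : 𝕍 → ℂ) (hfc : Continuous f) (hgc : Continuous g)
    (hfi : Integrable f) (hgi : Integrable g)
    (hf' : Integrable (𝓕 f)) (hg' : Integrable (𝓕 g)) :
    ∫ ξ, 𝓕 f ξ * conj (𝓕 g ξ) = ∫ x, f x * conj (g x) := by
  have key := VectorFourier.integral_fourierIntegral_smul_eq_flip (L := innerₗ 𝕍)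
      Real.continuous_fourierChar continuous_inner hfi (integrable_conj' hg')
  simp only [flip_innerₗ, smul_eq_mul] at key
  have h1 : ∀ ξ, VectorFourier.fourierIntegral 𝐞 volume (innerₗ 𝕍) f ξ = 𝓕 f ξ := fun _ => rfl
  have h2 : ∀ x, VectorFourier.fourierIntegral 𝐞 volume (innerₗ 𝕍)
      (fun ξ => conj (𝓕 g ξ)) x = conj (g x) := by
    intro x
    have : VectorFourier.fourierIntegral 𝐞 volume (innerₗ 𝕍)
        (fun ξ => conj (𝓕 g ξ)) x = ∫ v, 𝐞 (-⟪v, x⟫) • conj (𝓕 g v) := rfl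
    rw [this]
    have : ∀ v : 𝕍, (𝐞 (-⟪v, x⟫) : Circle) • (conj (𝓕 g v)) = conj ((𝐞 ⟪v, x⟫ : Circle) • 𝓕 g v) := by
      intro v
      simp only [Circle.smul_def, Real.fourierChar_apply, smul_eq_mul, map_mul]
      congr 1
      rw [← Complex.exp_conj]
      congr 1
      rw [map_mul, Complex.conj_ofReal, Complex.conj_I]
      push_cast
      ring
    simp_rw [this]
    rw [integral_conj]
    congr 1
    rw [← Real.fourierInv_eq]
    exact hgi.fourierInv_fourier_eq hg' hgc.continuousAt
  simp_rw [h1, h2] at key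
  simpa using key

lemma ind_nonneg (s : Set 𝕍) (x : 𝕍) : 0 ≤ s.indicator (1 : 𝕍 → ℝ) x := by
  by_cases h : x ∈ s <;> simp [h]

lemma ind_le_one (s : Set 𝕍) (x : 𝕍) : s.indicator (1 : 𝕍 → ℝ) x ≤ 1 := by
  by_cases h : x ∈ s <;> simp [h]

lemma norm_ind (s : Set 𝕍) (x : 𝕍) : ‖s.indicator (1 : 𝕍 → ℝ) x‖ = s.indicator (1 : 𝕍 → ℝ) x :=
  Real.norm_of_nonneg (ind_nonneg s x)

lemma integrable_ind_mul (p q t : 𝕍) (r s : ℝ) :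
    Integrable (fun a : 𝕍 => (closedBall p r).indicator (1 : 𝕍 → ℝ) a *
      (closedBall q s).indicator (1 : 𝕍 → ℝ) (t - a)) := by
  have m1 : Integrable ((closedBall p r).indicator (1 : 𝕍 → ℝ)) :=
    (integrable_indicator_iff measurableSet_closedBall).2
      (integrableOn_const measure_closedBall_lt_top.ne)
  refine m1.mono' ?_ ?_
  · apply AEStronglyMeasurable.mul
    · exact m1.1
    · exact ((measurable_one.indicator measurableSet_closedBall).comp
        (measurable_const.sub measurable_id)).aestronglyMeasurable
  · filter_upwards with a
    rw [Real.norm_of_nonneg (mul_nonneg (ind_nonneg _ _) (ind_nonneg _ _))]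
    calc (closedBall p r).indicator (1 : 𝕍 → ℝ) a *
          (closedBall q s).indicator (1 : 𝕍 → ℝ) (t - a)
        ≤ (closedBall p r).indicator (1 : 𝕍 → ℝ) a * 1 :=
          mul_le_mul_of_nonneg_left (ind_le_one _ _) (ind_nonneg _ _)
      _ = (closedBall p r).indicator (1 : 𝕍 → ℝ) a := mul_one _

lemma kernel_est (p q t : 𝕍) {r s : ℝ} (hr : 0 ≤ r) (hs : 0 ≤ s) :
    ∫ a : 𝕍, (closedBall p r).indicator (1 : 𝕍 → ℝ) a *
      (closedBall q s).indicator (1 : 𝕍 → ℝ) (t - a)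
    ≤ (volume (closedBall (0:𝕍) r)).toReal *
      (closedBall (p + q) (r + s)).indicator (1 : 𝕍 → ℝ) t := by
  by_cases ht : t ∈ closedBall (p + q) (r + s)
  · rw [Set.indicator_of_mem ht, Pi.one_apply, mul_one]
    have : ∫ a : 𝕍, (closedBall p r).indicator (1 : 𝕍 → ℝ) a *
        (closedBall q s).indicator (1 : 𝕍 → ℝ) (t - a)
        ≤ ∫ a : 𝕍, (closedBall p r).indicator (1 : 𝕍 → ℝ) a := by
      apply integral_mono (integrable_ind_mul p q t r s)
      · exact (integrable_indicator_iff measurableSet_closedBall).2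
          (integrableOn_const measure_closedBall_lt_top.ne)
      · intro a
        calc (closedBall p r).indicator (1 : 𝕍 → ℝ) a *
            (closedBall q s).indicator (1 : 𝕍 → ℝ) (t - a)
            ≤ (closedBall p r).indicator (1 : 𝕍 → ℝ) a * 1 := by
              exact mul_le_mul_of_nonneg_left (ind_le_one _ _) (ind_nonneg _ _)
          _ = (closedBall p r).indicator (1 : 𝕍 → ℝ) a := mul_one _
    refine this.trans ?_
    rw [integral_indicator_one measurableSet_closedBall]
    rw [measureReal_def, Measure.addHaar_closedBall_center]
  · rw [Set.indicator_of_notMem ht, mul_zero]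
    have : ∀ a : 𝕍, (closedBall p r).indicator (1 : 𝕍 → ℝ) a *
        (closedBall q s).indicator (1 : 𝕍 → ℝ) (t - a) = 0 := by
      intro a
      by_cases ha : a ∈ closedBall p r
      · by_cases hb : t - a ∈ closedBall q s
        · exfalso
          apply ht
          rw [mem_closedBall, dist_eq_norm] at *
          calc ‖t - (p + q)‖ = ‖(a - p) + ((t - a) - q)‖ := by congr 1; abel
            _ ≤ ‖a - p‖ + ‖(t - a) - q‖ := norm_add_le _ _
            _ ≤ r + s := by
                apply add_le_add
                · rw [← dist_eq_norm]; exact ha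
                · rw [← dist_eq_norm]; exact hb
        · rw [Set.indicator_of_notMem hb, mul_zero]
      · rw [Set.indicator_of_notMem ha, zero_mul]
    simp only [this, integral_zero]
    exact le_rfl

lemma kernel_est' (p q : 𝕍) {r s : ℝ} (hr : 0 ≤ r) (hs : 0 ≤ s) :
    ∫ x : 𝕍, (closedBall p r).indicator (1 : 𝕍 → ℝ) x *
      (closedBall q s).indicator (1 : 𝕍 → ℝ) x
    ≤ (volume (closedBall (0:𝕍) r)).toReal *
      (if dist p q ≤ r + s then (1:ℝ) else 0) := by
  by_cases hpq : dist p q ≤ r + s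
  · rw [if_pos hpq, mul_one]
    have : ∫ x : 𝕍, (closedBall p r).indicator (1 : 𝕍 → ℝ) x *
        (closedBall q s).indicator (1 : 𝕍 → ℝ) x
        ≤ ∫ x : 𝕍, (closedBall p r).indicator (1 : 𝕍 → ℝ) x := by
      apply integral_mono
      · have m1 : Integrable ((closedBall p r).indicator (1 : 𝕍 → ℝ)) :=
          (integrable_indicator_iff measurableSet_closedBall).2
            (integrableOn_const measure_closedBall_lt_top.ne)
        refine m1.mono' (m1.1.mul ((measurable_one.indicator
          measurableSet_closedBall).aestronglyMeasurable)) ?_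
        filter_upwards with x
        rw [Real.norm_of_nonneg (mul_nonneg (ind_nonneg _ _) (ind_nonneg _ _))]
        calc (closedBall p r).indicator (1 : 𝕍 → ℝ) x *
              (closedBall q s).indicator (1 : 𝕍 → ℝ) x
            ≤ (closedBall p r).indicator (1 : 𝕍 → ℝ) x * 1 :=
              mul_le_mul_of_nonneg_left (ind_le_one _ _) (ind_nonneg _ _)
          _ = (closedBall p r).indicator (1 : 𝕍 → ℝ) x := mul_one _
      · exact (integrable_indicator_iff measurableSet_closedBall).2
          (integrableOn_const measure_closedBall_lt_top.ne)
      · intro x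
        calc (closedBall p r).indicator (1 : 𝕍 → ℝ) x *
            (closedBall q s).indicator (1 : 𝕍 → ℝ) x
            ≤ (closedBall p r).indicator (1 : 𝕍 → ℝ) x * 1 :=
              mul_le_mul_of_nonneg_left (ind_le_one _ _) (ind_nonneg _ _)
          _ = (closedBall p r).indicator (1 : 𝕍 → ℝ) x := mul_one _
    refine this.trans ?_
    rw [integral_indicator_one measurableSet_closedBall, measureReal_def, Measure.addHaar_closedBall_center]
  · rw [if_neg hpq, mul_zero]
    have : ∀ x : 𝕍, (closedBall p r).indicator (1 : 𝕍 → ℝ) x *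
        (closedBall q s).indicator (1 : 𝕍 → ℝ) x = 0 := by
      intro x
      by_cases ha : x ∈ closedBall p r
      · by_cases hb : x ∈ closedBall q s
        · exfalso
          apply hpq
          calc dist p q ≤ dist p x + dist x q := dist_triangle _ _ _
            _ ≤ r + s := add_le_add (by rw [dist_comm]; exact ha) hb
        · rw [Set.indicator_of_notMem hb, mul_zero]
      · rw [Set.indicator_of_notMem ha, zero_mul]
    simp only [this, integral_zero]
    exact le_rfl

lemma integrable_ind_mul' (p q : 𝕍) (r s : ℝ) :
    Integrable (fun x : 𝕍 => (closedBall p r).indicator (1 : 𝕍 → ℝ) x *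
      (closedBall q s).indicator (1 : 𝕍 → ℝ) x) := by
  have m1 : Integrable ((closedBall p r).indicator (1 : 𝕍 → ℝ)) :=
    (integrable_indicator_iff measurableSet_closedBall).2
      (integrableOn_const measure_closedBall_lt_top.ne)
  refine m1.mono' (m1.1.mul ((measurable_one.indicator
    measurableSet_closedBall).aestronglyMeasurable)) ?_
  filter_upwards with x
  rw [Real.norm_of_nonneg (mul_nonneg (ind_nonneg _ _) (ind_nonneg _ _))]
  calc (closedBall p r).indicator (1 : 𝕍 → ℝ) x *
        (closedBall q s).indicator (1 : 𝕍 → ℝ) x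
      ≤ (closedBall p r).indicator (1 : 𝕍 → ℝ) x * 1 :=
        mul_le_mul_of_nonneg_left (ind_le_one _ _) (ind_nonneg _ _)
    _ = (closedBall p r).indicator (1 : 𝕍 → ℝ) x := mul_one _

lemma conv_sum_bound {ι κ : Type*} (A : Finset ι) (B : Finset κ) (z : ι → 𝕍) (w : κ → 𝕍)
    (c : ι → ℝ) (e : κ → ℝ) (hc : ∀ i, 0 ≤ c i) (he : ∀ k, 0 ≤ e k)
    {r s : ℝ} (hr : 0 ≤ r) (hs : 0 ≤ s)
    (f g : 𝕍 → ℝ) (hf0 : ∀ x, 0 ≤ f x) (hg0 : ∀ x, 0 ≤ g x)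
    (hfb : ∀ x, f x ≤ ∑ i ∈ A, c i * (closedBall (z i) r).indicator (1 : 𝕍 → ℝ) x)
    (hgb : ∀ x, g x ≤ ∑ k ∈ B, e k * (closedBall (w k) s).indicator (1 : 𝕍 → ℝ) x)
    (x : 𝕍) :
    (f ⋆[ContinuousLinearMap.mul ℝ ℝ] g) x ≤
      ∑ i ∈ A, ∑ k ∈ B, (c i * e k * (volume (closedBall (0:𝕍) r)).toReal) *
        (closedBall (z i + w k) (r + s)).indicator (1 : 𝕍 → ℝ) x := by
  rw [convolution_def]
  simp only [ContinuousLinearMap.mul_apply']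
  have hM : ∀ (i : ι) (k : κ), Integrable (fun t : 𝕍 => (c i * e k) *
      ((closedBall (z i) r).indicator (1 : 𝕍 → ℝ) t *
       (closedBall (w k) s).indicator (1 : 𝕍 → ℝ) (x - t))) :=
    fun i k => (integrable_ind_mul _ _ _ _ _).const_mul _
  have hMa : Integrable (fun t : 𝕍 => ∑ i ∈ A, ∑ k ∈ B, (c i * e k) *
      ((closedBall (z i) r).indicator (1 : 𝕍 → ℝ) t *
       (closedBall (w k) s).indicator (1 : 𝕍 → ℝ) (x - t))) := by
    apply integrable_finset_sum
    intro i _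
    exact integrable_finset_sum _ (fun k _ => hM i k)
  have step1 : (∫ t : 𝕍, f t * g (x - t)) ≤ ∫ t : 𝕍, ∑ i ∈ A, ∑ k ∈ B, (c i * e k) *
      ((closedBall (z i) r).indicator (1 : 𝕍 → ℝ) t *
       (closedBall (w k) s).indicator (1 : 𝕍 → ℝ) (x - t)) := by
    apply integral_mono_of_nonneg
    · filter_upwards with t
      exact mul_nonneg (hf0 t) (hg0 _)
    · exact hMa
    · filter_upwards with t
      calc f t * g (x - t)
          ≤ (∑ i ∈ A, c i * (closedBall (z i) r).indicator (1 : 𝕍 → ℝ) t) *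
            (∑ k ∈ B, e k * (closedBall (w k) s).indicator (1 : 𝕍 → ℝ) (x - t)) := by
            apply mul_le_mul (hfb t) (hgb _) (hg0 _)
            exact Finset.sum_nonneg fun i _ => mul_nonneg (hc i) (ind_nonneg _ _)
        _ = ∑ i ∈ A, ∑ k ∈ B, (c i * (closedBall (z i) r).indicator (1 : 𝕍 → ℝ) t) *
            (e k * (closedBall (w k) s).indicator (1 : 𝕍 → ℝ) (x - t)) :=
            Finset.sum_mul_sum _ _ _ _
        _ = ∑ i ∈ A, ∑ k ∈ B, (c i * e k) *
            ((closedBall (z i) r).indicator (1 : 𝕍 → ℝ) t *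
             (closedBall (w k) s).indicator (1 : 𝕍 → ℝ) (x - t)) := by
            apply Finset.sum_congr rfl
            intro i _
            apply Finset.sum_congr rfl
            intro k _
            ring
  refine step1.trans ?_
  rw [integral_finset_sum _ (fun i _ => integrable_finset_sum _ (fun k _ => hM i k))]
  apply Finset.sum_le_sum
  intro i _
  rw [integral_finset_sum _ (fun k _ => hM i k)]
  apply Finset.sum_le_sum
  intro k _
  rw [integral_const_mul]
  calc (c i * e k) * ∫ t : 𝕍, (closedBall (z i) r).indicator (1 : 𝕍 → ℝ) t *
        (closedBall (w k) s).indicator (1 : 𝕍 → ℝ) (x - t)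
      ≤ (c i * e k) * ((volume (closedBall (0:𝕍) r)).toReal *
        (closedBall (z i + w k) (r + s)).indicator (1 : 𝕍 → ℝ) x) :=
        mul_le_mul_of_nonneg_left (kernel_est _ _ _ hr hs) (mul_nonneg (hc i) (he k))
    _ = (c i * e k * (volume (closedBall (0:𝕍) r)).toReal) *
        (closedBall (z i + w k) (r + s)).indicator (1 : 𝕍 → ℝ) x := by ring

lemma integral_sum_bound {ι κ : Type*} (A : Finset ι) (B : Finset κ) (z : ι → 𝕍) (w : κ → 𝕍)
    (c : ι → ℝ) (e : κ → ℝ) (hc : ∀ i, 0 ≤ c i) (he : ∀ k, 0 ≤ e k)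
    {r s : ℝ} (hr : 0 ≤ r) (hs : 0 ≤ s)
    (f g : 𝕍 → ℝ) (hf0 : ∀ x, 0 ≤ f x) (hg0 : ∀ x, 0 ≤ g x)
    (hfb : ∀ x, f x ≤ ∑ i ∈ A, c i * (closedBall (z i) r).indicator (1 : 𝕍 → ℝ) x)
    (hgb : ∀ x, g x ≤ ∑ k ∈ B, e k * (closedBall (w k) s).indicator (1 : 𝕍 → ℝ) x) :
    (∫ x : 𝕍, f x * g x) ≤
      ∑ i ∈ A, ∑ k ∈ B, (c i * e k * (volume (closedBall (0:𝕍) r)).toReal) *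
        (if dist (z i) (w k) ≤ r + s then (1:ℝ) else 0) := by
  have hM : ∀ (i : ι) (k : κ), Integrable (fun x : 𝕍 => (c i * e k) *
      ((closedBall (z i) r).indicator (1 : 𝕍 → ℝ) x *
       (closedBall (w k) s).indicator (1 : 𝕍 → ℝ) x)) :=
    fun i k => (integrable_ind_mul' _ _ _ _).const_mul _
  have step1 : (∫ x : 𝕍, f x * g x) ≤ ∫ x : 𝕍, ∑ i ∈ A, ∑ k ∈ B, (c i * e k) *
      ((closedBall (z i) r).indicator (1 : 𝕍 → ℝ) x *
       (closedBall (w k) s).indicator (1 : 𝕍 → ℝ) x) := by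
    apply integral_mono_of_nonneg
    · filter_upwards with x
      exact mul_nonneg (hf0 x) (hg0 x)
    · apply integrable_finset_sum
      intro i _
      exact integrable_finset_sum _ (fun k _ => hM i k)
    · filter_upwards with x
      calc f x * g x
          ≤ (∑ i ∈ A, c i * (closedBall (z i) r).indicator (1 : 𝕍 → ℝ) x) *
            (∑ k ∈ B, e k * (closedBall (w k) s).indicator (1 : 𝕍 → ℝ) x) := by
            apply mul_le_mul (hfb x) (hgb x) (hg0 x)
            exact Finset.sum_nonneg fun i _ => mul_nonneg (hc i) (ind_nonneg _ _)
        _ = ∑ i ∈ A, ∑ k ∈ B, (c i * (closedBall (z i) r).indicator (1 : 𝕍 → ℝ) x) *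
            (e k * (closedBall (w k) s).indicator (1 : 𝕍 → ℝ) x) :=
            Finset.sum_mul_sum _ _ _ _
        _ = ∑ i ∈ A, ∑ k ∈ B, (c i * e k) *
            ((closedBall (z i) r).indicator (1 : 𝕍 → ℝ) x *
             (closedBall (w k) s).indicator (1 : 𝕍 → ℝ) x) := by
            apply Finset.sum_congr rfl
            intro i _
            apply Finset.sum_congr rfl
            intro k _
            ring
  refine step1.trans ?_
  rw [integral_finset_sum _ (fun i _ => integrable_finset_sum _ (fun k _ => hM i k))]
  apply Finset.sum_le_sum
  intro i _
  rw [integral_finset_sum _ (fun k _ => hM i k)]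
  apply Finset.sum_le_sum
  intro k _
  rw [integral_const_mul]
  calc (c i * e k) * ∫ x : 𝕍, (closedBall (z i) r).indicator (1 : 𝕍 → ℝ) x *
        (closedBall (w k) s).indicator (1 : 𝕍 → ℝ) x
      ≤ (c i * e k) * ((volume (closedBall (0:𝕍) r)).toReal *
        (if dist (z i) (w k) ≤ r + s then (1:ℝ) else 0)) :=
        mul_le_mul_of_nonneg_left (kernel_est' _ _ hr hs) (mul_nonneg (hc i) (he k))
    _ = (c i * e k * (volume (closedBall (0:𝕍) r)).toReal) *
        (if dist (z i) (w k) ≤ r + s then (1:ℝ) else 0) := by ring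
lemma conv_nonneg' {f g : 𝕍 → ℝ} (hf : ∀ x, 0 ≤ f x) (hg : ∀ x, 0 ≤ g x) (x : 𝕍) :
    0 ≤ (f ⋆[ContinuousLinearMap.mul ℝ ℝ] g) x := by
  rw [convolution_def]
  apply integral_nonneg
  intro t
  exact mul_nonneg (hf t) (hg _)

lemma triple_bound (μ0 μ1 μ2 : 𝕍 → ℝ) (P0 P1 P2 : Finset 𝕍) {δ : ℝ} (hδ : 0 < δ)
    (h0 : ∀ x, 0 ≤ μ0 x) (h1 : ∀ x, 0 ≤ μ1 x) (h2 : ∀ x, 0 ≤ μ2 x)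
    (hb0 : ∀ x, μ0 x ≤ ∑ p ∈ P0, (closedBall p δ).indicator (1 : 𝕍 → ℝ) x)
    (hb1 : ∀ x, μ1 x ≤ ∑ p ∈ P1, (closedBall p δ).indicator (1 : 𝕍 → ℝ) x)
    (hb2 : ∀ x, μ2 x ≤ ∑ p ∈ P2, (closedBall p δ).indicator (1 : 𝕍 → ℝ) x)
    (x : 𝕍) :
    ((μ0 ⋆[ContinuousLinearMap.mul ℝ ℝ] μ1) ⋆[ContinuousLinearMap.mul ℝ ℝ] μ2) x ≤
      ∑ a ∈ (P0 ×ˢ P1) ×ˢ P2,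
        ((volume (closedBall (0:𝕍) δ)).toReal * (volume (closedBall (0:𝕍) (δ+δ))).toReal) *
          (closedBall (a.1.1 + a.1.2 + a.2) (δ+δ+δ)).indicator (1 : 𝕍 → ℝ) x := by
  have hb01 : ∀ y, (μ0 ⋆[ContinuousLinearMap.mul ℝ ℝ] μ1) y ≤
      ∑ i ∈ P0 ×ˢ P1, (volume (closedBall (0:𝕍) δ)).toReal *
        (closedBall (i.1 + i.2) (δ+δ)).indicator (1 : 𝕍 → ℝ) y := by
    intro y
    calc (μ0 ⋆[ContinuousLinearMap.mul ℝ ℝ] μ1) y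
        ≤ ∑ i ∈ P0, ∑ k ∈ P1, ((1:ℝ) * 1 * (volume (closedBall (0:𝕍) δ)).toReal) *
          (closedBall (id i + id k) (δ+δ)).indicator (1 : 𝕍 → ℝ) y := by
          apply conv_sum_bound P0 P1 id id (fun _ => (1:ℝ)) (fun _ => (1:ℝ))
            (fun _ => zero_le_one) (fun _ => zero_le_one) hδ.le hδ.le μ0 μ1 h0 h1
            (fun t => by simpa [one_mul] using hb0 t)
            (fun t => by simpa [one_mul] using hb1 t)
      _ = ∑ i ∈ P0 ×ˢ P1, (volume (closedBall (0:𝕍) δ)).toReal *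
          (closedBall (i.1 + i.2) (δ+δ)).indicator (1 : 𝕍 → ℝ) y := by
          conv_rhs => rw [Finset.sum_product]
          exact Finset.sum_congr rfl fun i _ => Finset.sum_congr rfl fun k _ => by
            simp [one_mul]
  calc ((μ0 ⋆[ContinuousLinearMap.mul ℝ ℝ] μ1) ⋆[ContinuousLinearMap.mul ℝ ℝ] μ2) x
      ≤ ∑ i ∈ P0 ×ˢ P1, ∑ m ∈ P2,
          ((volume (closedBall (0:𝕍) δ)).toReal * 1 *
            (volume (closedBall (0:𝕍) (δ+δ))).toReal) *
          (closedBall ((i.1 + i.2) + id m) ((δ+δ)+δ)).indicator (1 : 𝕍 → ℝ) x := by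
        apply conv_sum_bound (P0 ×ˢ P1) P2 (fun i => i.1 + i.2) id
          (fun _ => (volume (closedBall (0:𝕍) δ)).toReal) (fun _ => (1:ℝ))
          (fun _ => ENNReal.toReal_nonneg) (fun _ => zero_le_one)
          (by positivity) hδ.le _ μ2 (conv_nonneg' h0 h1) h2 hb01
          (fun t => by simpa [one_mul] using hb2 t)
    _ = ∑ a ∈ (P0 ×ˢ P1) ×ˢ P2,
        ((volume (closedBall (0:𝕍) δ)).toReal * (volume (closedBall (0:𝕍) (δ+δ))).toReal) *
          (closedBall (a.1.1 + a.1.2 + a.2) (δ+δ+δ)).indicator (1 : 𝕍 → ℝ) x := by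
        conv_rhs => rw [Finset.sum_product]
        exact Finset.sum_congr rfl fun i _ => Finset.sum_congr rfl fun k _ => by
          simp [one_mul]

theorem stmt_9 (d : ℕ) :
    ∃ K > 0, ∀ (δ : ℝ), 0 < δ → δ ≤ 1 →
      ∀ (P : Fin 6 → Finset (EuclideanSpace ℝ (Fin d)))
        (μ : Fin 6 → EuclideanSpace ℝ (Fin d) → ℝ),
      (∀ j, ∀ p ∈ P j, ∀ q ∈ P j, p ≠ q → δ ≤ dist p q) →
      (∀ j, ContDiff ℝ (⊤ : ℕ∞) (μ j)) → (∀ j, HasCompactSupport (μ j)) →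
      (∀ j x, 0 ≤ μ j x) → (∀ j x, μ j x ≤ 1) →
      (∀ j, Function.support (μ j) ⊆ ⋃ p ∈ P j, Metric.closedBall p δ) →
      (∫ ξ, (𝓕 (fun x => (μ 0 x : ℂ)) ξ) * (𝓕 (fun x => (μ 1 x : ℂ)) ξ) *
          (𝓕 (fun x => (μ 2 x : ℂ)) ξ) *
          (starRingEnd ℂ) ((𝓕 (fun x => (μ 3 x : ℂ)) ξ) *
            (𝓕 (fun x => (μ 4 x : ℂ)) ξ) * (𝓕 (fun x => (μ 5 x : ℂ)) ξ))).re
        ≤ K * δ ^ (5 * d) *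
          (Set.ncard {t : (EuclideanSpace ℝ (Fin d)) × (EuclideanSpace ℝ (Fin d)) ×
              (EuclideanSpace ℝ (Fin d)) × (EuclideanSpace ℝ (Fin d)) ×
              (EuclideanSpace ℝ (Fin d)) × (EuclideanSpace ℝ (Fin d)) |
            t.1 ∈ P 0 ∧ t.2.1 ∈ P 1 ∧ t.2.2.1 ∈ P 2 ∧ t.2.2.2.1 ∈ P 3 ∧
            t.2.2.2.2.1 ∈ P 4 ∧ t.2.2.2.2.2 ∈ P 5 ∧
            ‖(t.1 + t.2.1 + t.2.2.1) - (t.2.2.2.1 + t.2.2.2.2.1 + t.2.2.2.2.2)‖ ≤ 6 * δ}) := by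
  classical
  set V1 : ℝ := (volume (Metric.ball (0 : (EuclideanSpace ℝ (Fin d))) 1)).toReal with hV1
  have hV1pos : 0 < V1 := by
    apply ENNReal.toReal_pos
    · exact (measure_ball_pos volume (0 : (EuclideanSpace ℝ (Fin d))) one_pos).ne'
    · exact (measure_ball_lt_top).ne
  refine ⟨3 ^ (5 * d) * V1 ^ 5, by positivity, ?_⟩
  intro δ hδ hδ1 P μ hsep hsm hcs hnn hle hsupp
  set L : ℂ →L[ℝ] ℂ →L[ℝ] ℂ := ContinuousLinearMap.mul ℝ ℂ with hLdef
  set Lr : ℝ →L[ℝ] ℝ →L[ℝ] ℝ := ContinuousLinearMap.mul ℝ ℝ with hLrdef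
  set ν : Fin 6 → (EuclideanSpace ℝ (Fin d)) → ℂ := fun j x => ((μ j x : ℝ) : ℂ) with hνdef
  have hνc : ∀ j, Continuous (ν j) := fun j =>
    Complex.continuous_ofReal.comp (hsm j).continuous
  have hνs : ∀ j, HasCompactSupport (ν j) := fun j =>
    (hcs j).comp_left (g := Complex.ofReal) Complex.ofReal_zero
  have hνsm : ∀ j, ContDiff ℝ ((⊤ : ℕ∞) : WithTop ℕ∞) (ν j) := fun j =>
    Complex.ofRealCLM.contDiff.comp ((hsm j).of_le (by simp))
  set fc : (EuclideanSpace ℝ (Fin d)) → ℂ := (ν 0 ⋆[L] ν 1) ⋆[L] ν 2 with hfcdef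
  set gc : (EuclideanSpace ℝ (Fin d)) → ℂ := (ν 3 ⋆[L] ν 4) ⋆[L] ν 5 with hgcdef
  set F : (EuclideanSpace ℝ (Fin d)) → ℝ := (μ 0 ⋆[Lr] μ 1) ⋆[Lr] μ 2 with hFdef
  set G : (EuclideanSpace ℝ (Fin d)) → ℝ := (μ 3 ⋆[Lr] μ 4) ⋆[Lr] μ 5 with hGdef
  -- continuity / support facts
  have h01c : Continuous (ν 0 ⋆[L] ν 1) :=
    (hνs 1).continuous_convolution_right L ((hνc 0).locallyIntegrable) (hνc 1)
  have h01s : HasCompactSupport (ν 0 ⋆[L] ν 1) := (hνs 0).convolution L (hνs 1)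
  have h34c : Continuous (ν 3 ⋆[L] ν 4) :=
    (hνs 4).continuous_convolution_right L ((hνc 3).locallyIntegrable) (hνc 4)
  have h34s : HasCompactSupport (ν 3 ⋆[L] ν 4) := (hνs 3).convolution L (hνs 4)
  have hfcc : Continuous fc :=
    (hνs 2).continuous_convolution_right L (h01c.locallyIntegrable) (hνc 2)
  have hfcs : HasCompactSupport fc := h01s.convolution L (hνs 2)
  have hgcc : Continuous gc :=
    (hνs 5).continuous_convolution_right L (h34c.locallyIntegrable) (hνc 5)
  have hgcs : HasCompactSupport gc := h34s.convolution L (hνs 5)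
  have hfcsm : ContDiff ℝ ((⊤ : ℕ∞) : WithTop ℕ∞) fc :=
    (hνs 2).contDiff_convolution_right L (h01c.locallyIntegrable) (hνsm 2)
  have hgcsm : ContDiff ℝ ((⊤ : ℕ∞) : WithTop ℕ∞) gc :=
    (hνs 5).contDiff_convolution_right L (h34c.locallyIntegrable) (hνsm 5)
  -- Fourier transform of the convolutions
  have key1 : ∀ ξ, 𝓕 fc ξ = 𝓕 (ν 0) ξ * 𝓕 (ν 1) ξ * 𝓕 (ν 2) ξ := by
    intro ξ
    rw [hfcdef, fourier_conv _ _ h01c (hνc 2) h01s (hνs 2),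
      fourier_conv _ _ (hνc 0) (hνc 1) (hνs 0) (hνs 1)]
  have key2 : ∀ ξ, 𝓕 gc ξ = 𝓕 (ν 3) ξ * 𝓕 (ν 4) ξ * 𝓕 (ν 5) ξ := by
    intro ξ
    rw [hgcdef, fourier_conv _ _ h34c (hνc 5) h34s (hνs 5),
      fourier_conv _ _ (hνc 3) (hνc 4) (hνs 3) (hνs 4)]
  -- Parseval
  have hpars : ∫ ξ, 𝓕 fc ξ * conj (𝓕 gc ξ) = ∫ x, fc x * conj (gc x) :=
    parseval fc gc hfcc hgcc (hfcc.integrable_of_hasCompactSupport hfcs)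
      (hgcc.integrable_of_hasCompactSupport hgcs)
      (integrable_fourier_of_compact fc hfcsm hfcs)
      (integrable_fourier_of_compact gc hgcsm hgcs)
  -- the complex convolutions are coercions of the real ones
  have hgen : ∀ a b c : Fin 6, ∀ x : (EuclideanSpace ℝ (Fin d)),
      ((ν a ⋆[L] ν b) ⋆[L] ν c) x = ((((μ a ⋆[Lr] μ b) ⋆[Lr] μ c) x : ℝ) : ℂ) := by
    intro a b c x
    have hab : ∀ y : (EuclideanSpace ℝ (Fin d)), (ν a ⋆[L] ν b) y = (((μ a ⋆[Lr] μ b) y : ℝ) : ℂ) := by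
      intro y
      rw [convolution_def, convolution_def]
      simp only [hLdef, hLrdef, hνdef, ContinuousLinearMap.mul_apply', ← Complex.ofReal_mul]
      exact integral_ofReal
    rw [convolution_def, convolution_def]
    simp only [hab]
    simp only [hLdef, hLrdef, hνdef, ContinuousLinearMap.mul_apply', hab, ← Complex.ofReal_mul]
    exact integral_ofReal
  have hfr : ∀ x, fc x = ((F x : ℝ) : ℂ) := fun x => hgen 0 1 2 x
  have hgr : ∀ x, gc x = ((G x : ℝ) : ℂ) := fun x => hgen 3 4 5 x
  -- rewrite the LHS
  have hLHS : (∫ ξ, (𝓕 (fun x => (μ 0 x : ℂ)) ξ) * (𝓕 (fun x => (μ 1 x : ℂ)) ξ) *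
          (𝓕 (fun x => (μ 2 x : ℂ)) ξ) *
          (starRingEnd ℂ) ((𝓕 (fun x => (μ 3 x : ℂ)) ξ) *
            (𝓕 (fun x => (μ 4 x : ℂ)) ξ) * (𝓕 (fun x => (μ 5 x : ℂ)) ξ))).re
      = ∫ x, F x * G x := by
    have hint : (∫ ξ, (𝓕 (fun x => (μ 0 x : ℂ)) ξ) * (𝓕 (fun x => (μ 1 x : ℂ)) ξ) *
          (𝓕 (fun x => (μ 2 x : ℂ)) ξ) *
          (starRingEnd ℂ) ((𝓕 (fun x => (μ 3 x : ℂ)) ξ) *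
            (𝓕 (fun x => (μ 4 x : ℂ)) ξ) * (𝓕 (fun x => (μ 5 x : ℂ)) ξ)))
        = ∫ ξ, 𝓕 fc ξ * conj (𝓕 gc ξ) := by
      congr 1
      funext ξ
      rw [key1, key2]
    rw [hint, hpars]
    have : ∫ x, fc x * conj (gc x) = ((∫ x, F x * G x : ℝ) : ℂ) := by
      rw [show (fun x => fc x * conj (gc x)) = fun x => ((F x * G x : ℝ) : ℂ) from
        funext fun x => by rw [hfr, hgr, Complex.conj_ofReal, Complex.ofReal_mul]]
      exact integral_ofReal
    rw [this, Complex.ofReal_re]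
  rw [hLHS]
  -- counting bound
  have hb : ∀ j x, μ j x ≤ ∑ p ∈ P j, (closedBall p δ).indicator (1 : (EuclideanSpace ℝ (Fin d)) → ℝ) x := by
    intro j x
    by_cases hx : μ j x = 0
    · rw [hx]
      exact Finset.sum_nonneg fun p _ => ind_nonneg _ _
    · have hxs : x ∈ ⋃ p ∈ P j, Metric.closedBall p δ := hsupp j hx
      simp only [Set.mem_iUnion] at hxs
      obtain ⟨p, hp, hxp⟩ := hxs
      calc μ j x ≤ 1 := hle j x
        _ = (closedBall p δ).indicator (1 : (EuclideanSpace ℝ (Fin d)) → ℝ) x := by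
            rw [Set.indicator_of_mem hxp]; rfl
        _ ≤ ∑ q ∈ P j, (closedBall q δ).indicator (1 : (EuclideanSpace ℝ (Fin d)) → ℝ) x :=
            Finset.single_le_sum
              (f := fun q => (closedBall q δ).indicator (1 : (EuclideanSpace ℝ (Fin d)) → ℝ) x)
              (fun q _ => ind_nonneg _ _) hp
  set c3 : ℝ := (volume (closedBall (0:(EuclideanSpace ℝ (Fin d))) δ)).toReal *
    (volume (closedBall (0:(EuclideanSpace ℝ (Fin d))) (δ+δ))).toReal with hc3
  have hc3nn : 0 ≤ c3 := mul_nonneg ENNReal.toReal_nonneg ENNReal.toReal_nonneg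
  have hFb : ∀ x, F x ≤ ∑ a ∈ (P 0 ×ˢ P 1) ×ˢ P 2,
      c3 * (closedBall (a.1.1 + a.1.2 + a.2) (δ+δ+δ)).indicator (1 : (EuclideanSpace ℝ (Fin d)) → ℝ) x :=
    triple_bound (μ 0) (μ 1) (μ 2) (P 0) (P 1) (P 2) hδ (hnn 0) (hnn 1) (hnn 2)
      (hb 0) (hb 1) (hb 2)
  have hGb : ∀ x, G x ≤ ∑ a ∈ (P 3 ×ˢ P 4) ×ˢ P 5,
      c3 * (closedBall (a.1.1 + a.1.2 + a.2) (δ+δ+δ)).indicator (1 : (EuclideanSpace ℝ (Fin d)) → ℝ) x :=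
    triple_bound (μ 3) (μ 4) (μ 5) (P 3) (P 4) (P 5) hδ (hnn 3) (hnn 4) (hnn 5)
      (hb 3) (hb 4) (hb 5)
  have hFnn : ∀ x, 0 ≤ F x := conv_nonneg' (conv_nonneg' (hnn 0) (hnn 1)) (hnn 2)
  have hGnn : ∀ x, 0 ≤ G x := conv_nonneg' (conv_nonneg' (hnn 3) (hnn 4)) (hnn 5)
  have hI := integral_sum_bound ((P 0 ×ˢ P 1) ×ˢ P 2) ((P 3 ×ˢ P 4) ×ˢ P 5)
    (fun a => a.1.1 + a.1.2 + a.2) (fun a => a.1.1 + a.1.2 + a.2)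
    (fun _ => c3) (fun _ => c3) (fun _ => hc3nn) (fun _ => hc3nn)
    (by positivity : (0:ℝ) ≤ δ+δ+δ) (by positivity : (0:ℝ) ≤ δ+δ+δ)
    F G hFnn hGnn hFb hGb
  set T : Finset (((((EuclideanSpace ℝ (Fin d))) × (EuclideanSpace ℝ (Fin d))) × (EuclideanSpace ℝ (Fin d))) × ((((EuclideanSpace ℝ (Fin d))) × (EuclideanSpace ℝ (Fin d))) × (EuclideanSpace ℝ (Fin d)))) :=
    (((P 0 ×ˢ P 1) ×ˢ P 2) ×ˢ ((P 3 ×ˢ P 4) ×ˢ P 5)).filter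
      (fun t => dist (t.1.1.1 + t.1.1.2 + t.1.2) (t.2.1.1 + t.2.1.2 + t.2.2)
        ≤ (δ+δ+δ) + (δ+δ+δ)) with hT
  have hsum : (∑ a ∈ (P 0 ×ˢ P 1) ×ˢ P 2, ∑ b ∈ (P 3 ×ˢ P 4) ×ˢ P 5,
      (c3 * c3 * (volume (closedBall (0:(EuclideanSpace ℝ (Fin d))) (δ+δ+δ))).toReal) *
        (if dist (a.1.1 + a.1.2 + a.2) (b.1.1 + b.1.2 + b.2) ≤ (δ+δ+δ) + (δ+δ+δ)
          then (1:ℝ) else 0))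
      = (c3 * c3 * (volume (closedBall (0:(EuclideanSpace ℝ (Fin d))) (δ+δ+δ))).toReal) * T.card := by
    rw [← Finset.sum_product']
    rw [← Finset.mul_sum]
    congr 1
    rw [Finset.sum_boole]
  replace hI := hI.trans (le_of_eq hsum)
  -- identify the cardinality
  have hcard : Set.ncard {t : ((EuclideanSpace ℝ (Fin d))) × ((EuclideanSpace ℝ (Fin d))) × ((EuclideanSpace ℝ (Fin d))) × ((EuclideanSpace ℝ (Fin d))) × ((EuclideanSpace ℝ (Fin d))) × ((EuclideanSpace ℝ (Fin d))) |
      t.1 ∈ P 0 ∧ t.2.1 ∈ P 1 ∧ t.2.2.1 ∈ P 2 ∧ t.2.2.2.1 ∈ P 3 ∧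
      t.2.2.2.2.1 ∈ P 4 ∧ t.2.2.2.2.2 ∈ P 5 ∧
      ‖(t.1 + t.2.1 + t.2.2.1) - (t.2.2.2.1 + t.2.2.2.2.1 + t.2.2.2.2.2)‖ ≤ 6 * δ}
      = T.card := by
    set φ : (((((EuclideanSpace ℝ (Fin d))) × (EuclideanSpace ℝ (Fin d))) × (EuclideanSpace ℝ (Fin d))) × ((((EuclideanSpace ℝ (Fin d))) × (EuclideanSpace ℝ (Fin d))) × (EuclideanSpace ℝ (Fin d)))) → ((EuclideanSpace ℝ (Fin d))) × ((EuclideanSpace ℝ (Fin d))) × ((EuclideanSpace ℝ (Fin d))) × ((EuclideanSpace ℝ (Fin d))) × ((EuclideanSpace ℝ (Fin d))) × ((EuclideanSpace ℝ (Fin d))) :=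
      fun t => (t.1.1.1, t.1.1.2, t.1.2, t.2.1.1, t.2.1.2, t.2.2) with hφ
    have hinj : Function.Injective φ := by
      rintro ⟨⟨⟨a1,a2⟩,a3⟩,⟨⟨a4,a5⟩,a6⟩⟩ ⟨⟨⟨b1,b2⟩,b3⟩,⟨⟨b4,b5⟩,b6⟩⟩ h
      simp only [hφ, Prod.mk.injEq] at h
      obtain ⟨e1,e2,e3,e4,e5,e6⟩ := h
      simp_all
    have hset : {t : ((EuclideanSpace ℝ (Fin d))) × ((EuclideanSpace ℝ (Fin d))) × ((EuclideanSpace ℝ (Fin d))) × ((EuclideanSpace ℝ (Fin d))) × ((EuclideanSpace ℝ (Fin d))) × ((EuclideanSpace ℝ (Fin d))) |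
        t.1 ∈ P 0 ∧ t.2.1 ∈ P 1 ∧ t.2.2.1 ∈ P 2 ∧ t.2.2.2.1 ∈ P 3 ∧
        t.2.2.2.2.1 ∈ P 4 ∧ t.2.2.2.2.2 ∈ P 5 ∧
        ‖(t.1 + t.2.1 + t.2.2.1) - (t.2.2.2.1 + t.2.2.2.2.1 + t.2.2.2.2.2)‖ ≤ 6 * δ}
        = φ '' (T : Set _) := by
      ext ⟨x1,x2,x3,x4,x5,x6⟩
      simp only [Set.mem_setOf_eq, Set.mem_image, hT, Finset.coe_filter,
        Finset.mem_product, Set.mem_setOf_eq, hφ, Prod.mk.injEq]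
      constructor
      · rintro ⟨h1,h2,h3,h4,h5,h6,h7⟩
        refine ⟨(((x1,x2),x3),((x4,x5),x6)), ⟨⟨⟨⟨h1,h2⟩,h3⟩,⟨⟨h4,h5⟩,h6⟩⟩, ?_⟩,
          rfl, rfl, rfl, rfl, rfl, rfl⟩
        rw [dist_eq_norm]
        calc ‖x1 + x2 + x3 - (x4 + x5 + x6)‖ ≤ 6 * δ := h7
          _ = (δ+δ+δ) + (δ+δ+δ) := by ring
      · rintro ⟨⟨⟨⟨p1,p2⟩,p3⟩,⟨⟨p4,p5⟩,p6⟩⟩, ⟨⟨⟨⟨m1,m2⟩,m3⟩,⟨⟨m4,m5⟩,m6⟩⟩, hcond⟩,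
          e1, e2, e3, e4, e5, e6⟩
        subst e1; subst e2; subst e3; subst e4; subst e5; subst e6
        refine ⟨m1, m2, m3, m4, m5, m6, ?_⟩
        rw [← dist_eq_norm]
        linarith [hcond]
    rw [hset, Set.ncard_image_of_injective _ hinj, Set.ncard_coe_finset]
  rw [hcard]
  -- the scalar estimate
  have hvol : ∀ r : ℝ, 0 ≤ r → (volume (closedBall (0:(EuclideanSpace ℝ (Fin d))) r)).toReal = r ^ d * V1 := by
    intro r hr
    rw [Measure.addHaar_closedBall _ _ hr, ENNReal.toReal_mul,
      ENNReal.toReal_ofReal (by positivity), finrank_euclideanSpace_fin]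
  set M : ℝ := (volume (closedBall (0:(EuclideanSpace ℝ (Fin d))) (δ+δ+δ))).toReal with hM
  have hMnn : 0 ≤ M := ENNReal.toReal_nonneg
  have hm1 : (volume (closedBall (0:(EuclideanSpace ℝ (Fin d))) δ)).toReal ≤ M :=
    ENNReal.toReal_le_toReal measure_closedBall_lt_top.ne measure_closedBall_lt_top.ne |>.mpr
      (measure_mono (closedBall_subset_closedBall (by linarith)))
  have hm2 : (volume (closedBall (0:(EuclideanSpace ℝ (Fin d))) (δ+δ))).toReal ≤ M :=
    ENNReal.toReal_le_toReal measure_closedBall_lt_top.ne measure_closedBall_lt_top.ne |>.mpr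
      (measure_mono (closedBall_subset_closedBall (by linarith)))
  have hcoef : c3 * c3 * M ≤ 3 ^ (5 * d) * V1 ^ 5 * δ ^ (5 * d) := by
    have h1 : c3 ≤ M * M :=
      mul_le_mul hm1 hm2 ENNReal.toReal_nonneg hMnn
    have h2 : c3 * c3 * M ≤ (M * M) * (M * M) * M := by
      apply mul_le_mul (mul_le_mul h1 h1 hc3nn (mul_nonneg hMnn hMnn)) le_rfl hMnn
      positivity
    refine h2.trans (le_of_eq ?_)
    have hM3 : M = 3 ^ d * δ ^ d * V1 := by
      rw [hM, show δ + δ + δ = 3 * δ by ring, hvol _ (by positivity), mul_pow]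
    rw [hM3, show 5 * d = d * 5 from Nat.mul_comm 5 d, pow_mul, pow_mul]
    ring
  calc ∫ x, F x * G x
      ≤ (c3 * c3 * M) * T.card := hI
    _ ≤ (3 ^ (5 * d) * V1 ^ 5 * δ ^ (5 * d)) * T.card := by
        apply mul_le_mul_of_nonneg_right hcoef (Nat.cast_nonneg _)

end AuxSect
end

section
/- Let μ be a nontrivial finite Borel measure on ℝᵈ, ψ ∈ C_c^∞(ℝᵈ) with ψ ≥ 0 and ∫ψ = 1, ψ_δ(x) := δ^{−d}ψ(x/δ), and μ_δ := μ ∗ ψ_δ. Suppose s ∈ [0,d] and δ₀ > 0 satisfy ‖μ_δ‖²_{L²(ℝᵈ)} ≤ δ^{s−d} for all 0 < δ ≤ δ₀. Then the δ-covering number of supp μ satisfies |supp μ|_δ ≥ c_ψ · μ(ℝᵈ)² · δ^{−s} for all 0 < δ ≤ δ₀, where c_ψ > 0 depends only on ψ. -/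
open MeasureTheory Set
open scoped ENNReal

/-- The support of a Borel measure: points all of whose neighbourhoods have
positive measure. -/
def measSupport {d : ℕ} (μ : Measure (Fin d → ℝ)) : Set (Fin d → ℝ) :=
  {x | ∀ r > 0, 0 < μ (Metric.ball x r)}

lemma measSupport_compl_null {d : ℕ} (μ : Measure (Fin d → ℝ)) :
    μ (measSupport μ)ᶜ = 0 := by
  set C := (measSupport μ)ᶜ with hC
  have h : ∀ x ∈ C, ∃ r > 0, μ (Metric.ball x r) = 0 := by
    intro x hx
    simp only [hC, measSupport, mem_compl_iff, mem_setOf_eq, not_forall] at hx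
    obtain ⟨r, hr, hr'⟩ := hx
    exact ⟨r, hr, by simpa using hr'⟩
  choose! r hr hr0 using h
  have hcover : C ⊆ ⋃ (x : C), Metric.ball (x : Fin d → ℝ) (r x) :=
    fun x hx => mem_iUnion.2 ⟨⟨x, hx⟩, Metric.mem_ball_self (hr x hx)⟩
  obtain ⟨T, hT, hTeq⟩ := TopologicalSpace.isOpen_iUnion_countable
    (fun x : C => Metric.ball (x : Fin d → ℝ) (r x)) (fun _ => Metric.isOpen_ball)
  refine measure_mono_null (hcover.trans hTeq.symm.subset) ?_
  exact (measure_biUnion_null_iff hT).2 fun x _ => hr0 x x.2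

theorem stmt_10 (d : ℕ) (ψ : (Fin d → ℝ) → ℝ)
    (hψ_smooth : ContDiff ℝ (⊤ : ℕ∞) ψ) (hψ_supp : HasCompactSupport ψ)
    (hψ_nonneg : ∀ x, 0 ≤ ψ x) (hψ_int : ∫ x, ψ x = 1) :
    ∃ c > 0, ∀ (μ : Measure (Fin d → ℝ)) (_ : IsFiniteMeasure μ), μ ≠ 0 →
      ∀ (s : ℝ), s ∈ Set.Icc (0 : ℝ) d →
      ∀ (δ₀ : ℝ), 0 < δ₀ →
      (∀ δ : ℝ, 0 < δ → δ ≤ δ₀ →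
        ∫ x, (∫ y, δ ^ (-(d : ℝ)) * ψ (δ⁻¹ • (x - y)) ∂μ) ^ 2 ≤ δ ^ (s - d)) →
      ∀ δ : ℝ, 0 < δ → δ ≤ δ₀ →
        ∀ F : Finset (Fin d → ℝ),
          measSupport μ ⊆ ⋃ x ∈ F, Metric.closedBall x δ →
          c * (μ Set.univ).toReal ^ 2 * δ ^ (-s) ≤ (F.card : ℝ) := by
  obtain ⟨R, hR1, hRsub⟩ : ∃ R, 1 < R ∧ tsupport ψ ⊆ Metric.closedBall 0 R :=
    hψ_supp.isBounded.subset_closedBall_lt 1 0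
  have hR0 : 0 < R := lt_trans one_pos hR1
  refine ⟨((2 * (1 + R)) ^ d)⁻¹, by positivity, ?_⟩
  intro μ hμfin hμne s hs δ₀ hδ₀ hL2 δ hδ hδδ₀ F hcov
  obtain ⟨M, hM⟩ := hψ_supp.exists_bound_of_continuous hψ_smooth.continuous
  have hδd : (0:ℝ) < δ ^ (-(d:ℝ)) := Real.rpow_pos_of_pos hδ _
  set f : (Fin d → ℝ) → ℝ := fun x => ∫ y, δ ^ (-(d : ℝ)) * ψ (δ⁻¹ • (x - y)) ∂μ with hf
  -- basic integrability and continuity facts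
  have hint_y : ∀ x, Integrable (fun y => δ ^ (-(d : ℝ)) * ψ (δ⁻¹ • (x - y))) μ := by
    intro x
    refine Integrable.mono' (integrable_const (δ ^ (-(d:ℝ)) * M)) ?_ ?_
    · exact (Continuous.mul continuous_const (hψ_smooth.continuous.comp
        (by fun_prop))).aestronglyMeasurable
    · refine ae_of_all _ fun y => ?_
      rw [norm_mul, Real.norm_of_nonneg hδd.le]
      exact mul_le_mul_of_nonneg_left (hM _) hδd.le
  have hf_cont : Continuous f := by
    refine continuous_of_dominated (F := fun x y => δ ^ (-(d : ℝ)) * ψ (δ⁻¹ • (x - y)))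
      (bound := fun _ => δ ^ (-(d:ℝ)) * M) (fun x => (hint_y x).1) ?_ (integrable_const _) ?_
    · intro x
      refine ae_of_all _ fun y => ?_
      rw [norm_mul, Real.norm_of_nonneg hδd.le]
      exact mul_le_mul_of_nonneg_left (hM _) hδd.le
    · refine ae_of_all _ fun y => ?_
      exact Continuous.mul continuous_const (hψ_smooth.continuous.comp
        (by fun_prop))
  have hf_nonneg : ∀ x, 0 ≤ f x := fun x =>
    integral_nonneg fun y => mul_nonneg hδd.le (hψ_nonneg _)
  have hψ_integrable : Integrable ψ := hψ_smooth.continuous.integrable_of_hasCompactSupport hψ_supp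
  have hδinv : (δ:ℝ)⁻¹ ≠ 0 := inv_ne_zero hδ.ne'
  have hcomp_int : ∀ y : Fin d → ℝ, Integrable (fun x => ψ (δ⁻¹ • (x - y))) :=
    fun y => ((integrable_comp_smul_iff volume ψ hδinv).2 hψ_integrable).comp_sub_right y
  have hval : ∀ y : Fin d → ℝ, (∫ x, ψ (δ⁻¹ • (x - y))) = δ ^ d := by
    intro y
    rw [show (fun x => ψ (δ⁻¹ • (x - y))) = (fun x => (fun z => ψ (δ⁻¹ • z)) (x - y)) from rfl]
    rw [integral_sub_right_eq_self (fun z => ψ (δ⁻¹ • z)) y]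
    rw [Measure.integral_comp_smul volume ψ (δ⁻¹)]
    simp [Module.finrank_fin_fun, hψ_int, abs_of_pos, inv_pow, hδ, pow_pos]
  -- total mass of f
  have htotal : ∫⁻ x, ENNReal.ofReal (f x) = μ univ := by
    have h1 : ∀ x, ENNReal.ofReal (f x)
        = ∫⁻ y, ENNReal.ofReal (δ ^ (-(d:ℝ)) * ψ (δ⁻¹ • (x - y))) ∂μ :=
      fun x => ofReal_integral_eq_lintegral_ofReal (hint_y x)
        (ae_of_all _ fun y => mul_nonneg hδd.le (hψ_nonneg _))
    simp_rw [h1]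
    rw [lintegral_lintegral_swap]
    · have h2 : ∀ y, ∫⁻ x, ENNReal.ofReal (δ ^ (-(d:ℝ)) * ψ (δ⁻¹ • (x - y))) = 1 := by
        intro y
        rw [← ofReal_integral_eq_lintegral_ofReal ((hcomp_int y).const_mul _)
          (ae_of_all _ fun x => mul_nonneg hδd.le (hψ_nonneg _))]
        rw [integral_const_mul, hval y]
        rw [← Real.rpow_natCast δ d, ← Real.rpow_add hδ]
        norm_num
      simp_rw [h2]
      simp
    · have hψc := hψ_smooth.continuous
      exact (ENNReal.continuous_ofReal.comp (show Continuous (fun p : (Fin d → ℝ) × (Fin d → ℝ) =>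
        δ ^ (-(d:ℝ)) * ψ (δ⁻¹ • (p.1 - p.2))) by fun_prop)).aemeasurable
  -- the enlarged covering set
  set S : Set (Fin d → ℝ) := ⋃ z ∈ F, Metric.closedBall z (δ * (1 + R)) with hS
  have hSmeas : MeasurableSet S :=
    F.measurableSet_biUnion (fun z _ => measurableSet_closedBall)
  have hrad : (0:ℝ) ≤ δ * (1 + R) := by positivity
  have hSvol : volume S ≤ (F.card : ℝ≥0∞) * ENNReal.ofReal ((2 * (δ * (1 + R))) ^ d) := by
    calc volume S ≤ ∑ z ∈ F, volume (Metric.closedBall z (δ * (1 + R))) :=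
          measure_biUnion_finset_le _ _
      _ = ∑ z ∈ F, ENNReal.ofReal ((2 * (δ * (1 + R))) ^ d) := by
          refine Finset.sum_congr rfl fun z _ => ?_
          rw [Real.volume_pi_closedBall z hrad, Fintype.card_fin]
      _ = (F.card : ℝ≥0∞) * ENNReal.ofReal ((2 * (δ * (1 + R))) ^ d) := by
          rw [Finset.sum_const, nsmul_eq_mul]
  have hSvol_fin : volume S ≠ ∞ :=
    (lt_of_le_of_lt hSvol (by finiteness)).ne
  -- f vanishes outside S
  have hfS : ∀ x ∉ S, f x = 0 := by
    intro x hx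
    refine integral_eq_zero_of_ae ?_
    rw [Filter.EventuallyEq, ae_iff]
    refine measure_mono_null ?_ (measSupport_compl_null μ)
    intro y hy
    simp only [mem_setOf_eq] at hy
    intro hymem
    have hψne : ψ (δ⁻¹ • (x - y)) ≠ 0 := by
      intro h0
      exact hy (by simp [h0])
    have hmem : δ⁻¹ • (x - y) ∈ Metric.closedBall (0 : Fin d → ℝ) R :=
      hRsub (subset_tsupport ψ hψne)
    have hxy : ‖x - y‖ ≤ δ * R := by
      have := mem_closedBall_zero_iff.1 hmem
      rw [norm_smul, Real.norm_eq_abs, abs_of_pos (inv_pos.2 hδ)] at this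
      calc ‖x - y‖ = δ * (δ⁻¹ * ‖x - y‖) := by field_simp
        _ ≤ δ * R := by
            have h' := this
            nlinarith [norm_nonneg (x - y)]
    obtain ⟨z, hzF, hyz⟩ : ∃ z ∈ F, y ∈ Metric.closedBall z δ := by
      have := hcov hymem
      simpa using this
    apply hx
    refine mem_biUnion hzF ?_
    rw [Metric.mem_closedBall]
    calc dist x z ≤ dist x y + dist y z := dist_triangle _ _ _
      _ ≤ δ * R + δ := by
          refine add_le_add ?_ (Metric.mem_closedBall.1 hyz)
          rw [dist_eq_norm]; exact hxy
      _ = δ * (1 + R) := by ring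
  -- f is bounded
  have hbd : ∀ x, |f x| ≤ δ ^ (-(d:ℝ)) * M * (μ univ).toReal := by
    intro x
    calc |f x| ≤ ∫ y, ‖δ ^ (-(d:ℝ)) * ψ (δ⁻¹ • (x - y))‖ ∂μ := by
          rw [← Real.norm_eq_abs]; exact norm_integral_le_integral_norm _
      _ ≤ ∫ _y, δ ^ (-(d:ℝ)) * M ∂μ := by
          refine integral_mono (hint_y x).norm (integrable_const _) fun y => ?_
          rw [norm_mul, Real.norm_of_nonneg hδd.le]
          exact mul_le_mul_of_nonneg_left (hM _) hδd.le
      _ = δ ^ (-(d:ℝ)) * M * (μ univ).toReal := by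
          rw [integral_const, smul_eq_mul, mul_comm, measureReal_def]
  -- f² is integrable
  have hf2_int : Integrable (fun x => f x ^ 2) := by
    have heq : (fun x => f x ^ 2) = S.indicator (fun x => f x ^ 2) := by
      ext x
      by_cases hx : x ∈ S
      · rw [indicator_of_mem hx]
      · rw [indicator_of_notMem hx, hfS x hx]; ring
    rw [heq, integrable_indicator_iff hSmeas]
    refine Measure.integrableOn_of_bounded hSvol_fin
      ((hf_cont.pow 2).aestronglyMeasurable) (M := (δ ^ (-(d:ℝ)) * M * (μ univ).toReal) ^ 2) ?_
    refine ae_of_all _ fun x => ?_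
    rw [Real.norm_eq_abs, abs_pow]
    exact pow_le_pow_left₀ (abs_nonneg _) (hbd x) 2
  -- bound on the L² lintegral
  have hL2' : ∫⁻ x, ENNReal.ofReal (f x ^ 2) ≤ ENNReal.ofReal (δ ^ (s - d)) := by
    rw [← ofReal_integral_eq_lintegral_ofReal hf2_int
      (ae_of_all _ fun x => sq_nonneg _)]
    exact ENNReal.ofReal_le_ofReal (hL2 δ hδ hδδ₀)
  -- Cauchy–Schwarz
  have hCS : μ univ ≤ (ENNReal.ofReal (δ ^ (s - d))) ^ ((1:ℝ)/2) * (volume S) ^ ((1:ℝ)/2) := by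
    rw [← htotal]
    have hres : ∫⁻ x, ENNReal.ofReal (f x) = ∫⁻ x in S, ENNReal.ofReal (f x) := by
      rw [← lintegral_indicator hSmeas]
      congr 1
      ext x
      by_cases hx : x ∈ S
      · rw [indicator_of_mem hx]
      · rw [indicator_of_notMem hx, hfS x hx, ENNReal.ofReal_zero]
    rw [hres]
    have hmeas : AEMeasurable (fun x => ENNReal.ofReal (f x)) (volume.restrict S) :=
      (hf_cont.measurable.ennreal_ofReal).aemeasurable
    have hpq : Real.HolderConjugate 2 2 := Real.HolderConjugate.two_two
    have hold := ENNReal.lintegral_mul_le_Lp_mul_Lq (volume.restrict S) hpq hmeas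
      (aemeasurable_const (b := (1:ℝ≥0∞)))
    simp only [Pi.mul_apply, mul_one, ENNReal.one_rpow, lintegral_const, one_mul,
      Measure.restrict_apply_univ] at hold
    refine hold.trans ?_
    gcongr
    calc ∫⁻ x in S, ENNReal.ofReal (f x) ^ (2:ℝ)
        ≤ ∫⁻ x, ENNReal.ofReal (f x) ^ (2:ℝ) :=
          setLIntegral_le_lintegral _ _
      _ = ∫⁻ x, ENNReal.ofReal (f x ^ 2) := by
          refine lintegral_congr fun x => ?_
          rw [ENNReal.ofReal_rpow_of_nonneg (hf_nonneg x) (by norm_num)]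
          norm_num [Real.rpow_natCast (f x) 2]
      _ ≤ ENNReal.ofReal (δ ^ (s - d)) := hL2'
  -- square it
  have hsq : (μ univ) ^ 2 ≤ ENNReal.ofReal (δ ^ (s - d)) * volume S := by
    calc (μ univ) ^ 2
        ≤ ((ENNReal.ofReal (δ ^ (s - d))) ^ ((1:ℝ)/2) * (volume S) ^ ((1:ℝ)/2)) ^ 2 :=
          pow_le_pow_left' hCS 2
      _ = ENNReal.ofReal (δ ^ (s - d)) * volume S := by
          rw [mul_pow, ← ENNReal.rpow_natCast (_ ^ ((1:ℝ)/2)) 2,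
            ← ENNReal.rpow_natCast ((volume S) ^ ((1:ℝ)/2)) 2,
            ← ENNReal.rpow_mul, ← ENNReal.rpow_mul]
          norm_num
  -- combine with covering bound, pass to the reals
  have hmain : (μ univ).toReal ^ 2
      ≤ δ ^ (s - d) * ((F.card : ℝ) * (2 * (δ * (1 + R))) ^ d) := by
    have h1 : (μ univ) ^ 2
        ≤ ENNReal.ofReal (δ ^ (s - d)) * ((F.card : ℝ≥0∞) * ENNReal.ofReal ((2 * (δ * (1 + R))) ^ d)) :=
      hsq.trans (mul_le_mul_right hSvol _)
    have h2 := ENNReal.toReal_mono (by finiteness) h1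
    rw [ENNReal.toReal_pow] at h2
    rw [ENNReal.toReal_mul, ENNReal.toReal_mul, ENNReal.toReal_ofReal
      (Real.rpow_nonneg hδ.le _), ENNReal.toReal_ofReal (by positivity),
      ENNReal.toReal_natCast] at h2
    exact h2
  have hδs : (0:ℝ) < δ ^ s := Real.rpow_pos_of_pos hδ _
  have hK : (0:ℝ) < (2 * (1 + R)) ^ d := by positivity
  have hN0 : (0:ℝ) ≤ (F.card : ℝ) := Nat.cast_nonneg _
  have hmain' : (μ univ).toReal ^ 2 ≤ (F.card : ℝ) * ((2 * (1 + R)) ^ d * δ ^ s) := by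
    have hrw : δ ^ (s - d) * ((F.card : ℝ) * (2 * (δ * (1 + R))) ^ d)
        = (F.card : ℝ) * ((2 * (1 + R)) ^ d * (δ ^ (s - d) * δ ^ (d:ℕ))) := by
      rw [show (2 * (δ * (1 + R))) = δ * (2 * (1 + R)) by ring, mul_pow]
      ring
    have hδpow : δ ^ (s - d) * (δ:ℝ) ^ (d:ℕ) = δ ^ s := by
      rw [← Real.rpow_natCast δ d, ← Real.rpow_add hδ]
      norm_num
    rw [hrw, hδpow] at hmain
    exact hmain
  rw [Real.rpow_neg hδ.le]
  calc ((2 * (1 + R)) ^ d)⁻¹ * (μ univ).toReal ^ 2 * (δ ^ s)⁻¹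
      ≤ ((2 * (1 + R)) ^ d)⁻¹ * ((F.card : ℝ) * ((2 * (1 + R)) ^ d * δ ^ s)) * (δ ^ s)⁻¹ := by
        gcongr
    _ = (F.card : ℝ) := by field_simp
end

section
/- Let θ ∈ (0,1] and Ω_θ := {(σ₁,σ₂) ∈ ℝ² : |（σ₁,σ₂)| ≤ 10 and 6σ₂ − 2σ₁² ≥ θ²}. Then the map Ψ(σ₁,σ₂) := (2σ₁, √(6σ₂ − 2σ₁²)) is bilipschitz on Ω_θ with bilipschitz constant O(θ^{−1}): there exist absolute constants c, C > 0 such that c·θ·|σ − η| ≤ |Ψ(σ) − Ψ(η)| ≤ C·θ^{−1}·|σ − η| for all σ, η ∈ Ω_θ. -/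
/-- The domain `Ω_θ`. -/
def stmt14Omega (θ : ℝ) : Set (ℝ × ℝ) :=
  {σ : ℝ × ℝ | Real.sqrt (σ.1 ^ 2 + σ.2 ^ 2) ≤ 10 ∧ θ ^ 2 ≤ 6 * σ.2 - 2 * σ.1 ^ 2}

/-- The map `Ψ(σ₁,σ₂) = (2σ₁, √(6σ₂ − 2σ₁²))`. -/
noncomputable def stmt14Psi (σ : ℝ × ℝ) : ℝ × ℝ :=
  (2 * σ.1, Real.sqrt (6 * σ.2 - 2 * σ.1 ^ 2))

/-!
The first coordinate of `Ψ` is linear, so everything is about `√q` with `q σ = 6σ₂ − 2σ₁²`.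
On `Ω_θ` the radicand `q` lies in `[θ², 64]` and is `46`-Lipschitz, and
`(√q σ − √q η)(√q σ + √q η) = q σ − q η` with `2θ ≤ √q σ + √q η ≤ 16`.
Dividing by the sum gives the upper bound `O(θ⁻¹)`; multiplying by it recovers `q σ − q η`,
from which `σ₂ − η₂` is read off, giving the lower bound.
-/

open Real

theorem sqrt_sub_sqrt_mul_sqrt_add {r s : ℝ} (hr : 0 ≤ r) (hs : 0 ≤ s) :
    (√r - √s) * (√r + √s) = r - s := by
  calc (√r - √s) * (√r + √s) = √r ^ 2 - √s ^ 2 := by ring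
    _ = r - s := by rw [sq_sqrt hr, sq_sqrt hs]

theorem abs_sqrt_sub_sqrt_le {r s θ : ℝ} (hθ : 0 < θ) (hr : θ ^ 2 ≤ r) (hs : θ ^ 2 ≤ s) :
    |√r - √s| ≤ |r - s| / (2 * θ) := by
  have hθr : θ ≤ √r := le_sqrt_of_sq_le hr
  have hθs : θ ≤ √s := le_sqrt_of_sq_le hs
  rw [le_div_iff₀ (by positivity),
    ← sqrt_sub_sqrt_mul_sqrt_add ((sq_nonneg θ).trans hr) ((sq_nonneg θ).trans hs),
    abs_mul, abs_of_pos (by linarith : 0 < √r + √s)]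
  gcongr
  linarith

theorem abs_sub_le_mul_abs_sqrt_sub_sqrt {r s R : ℝ} (hR : 0 ≤ R) (hr : 0 ≤ r) (hs : 0 ≤ s)
    (hrR : r ≤ R ^ 2) (hsR : s ≤ R ^ 2) : |r - s| ≤ 2 * R * |√r - √s| := by
  have hrR' : √r ≤ R := (sqrt_le_left hR).2 hrR
  have hsR' : √s ≤ R := (sqrt_le_left hR).2 hsR
  rw [← sqrt_sub_sqrt_mul_sqrt_add hr hs, abs_mul, mul_comm,
    abs_of_nonneg (by positivity : 0 ≤ √r + √s)]
  gcongr
  linarith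

def stmt14Radicand (σ : ℝ × ℝ) : ℝ := 6 * σ.2 - 2 * σ.1 ^ 2

theorem stmt14Radicand_sub (σ η : ℝ × ℝ) :
    stmt14Radicand σ - stmt14Radicand η = 6 * (σ.2 - η.2) - 2 * (σ.1 + η.1) * (σ.1 - η.1) := by
  unfold stmt14Radicand
  ring

section BallOfRadiusTen

variable {σ η : ℝ × ℝ}

theorem abs_fst_le_of_norm_le {r : ℝ} (hσ : ‖σ‖ ≤ r) : |σ.1| ≤ r :=
  (norm_fst_le σ).trans hσ

theorem abs_snd_le_of_norm_le {r : ℝ} (hσ : ‖σ‖ ≤ r) : |σ.2| ≤ r :=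
  (norm_snd_le σ).trans hσ

theorem abs_stmt14Radicand_sub_le (hσ : ‖σ‖ ≤ 10) (hη : ‖η‖ ≤ 10) :
    |stmt14Radicand σ - stmt14Radicand η| ≤ 46 * ‖σ - η‖ := by
  have h₁ : |σ.1 - η.1| ≤ ‖σ - η‖ := norm_fst_le (σ - η)
  have h₂ : |σ.2 - η.2| ≤ ‖σ - η‖ := norm_snd_le (σ - η)
  have hsum : |σ.1 + η.1| ≤ 20 := (abs_add_le _ _).trans
    (by linarith [abs_fst_le_of_norm_le hσ, abs_fst_le_of_norm_le hη])
  rw [stmt14Radicand_sub]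
  calc |6 * (σ.2 - η.2) - 2 * (σ.1 + η.1) * (σ.1 - η.1)|
      ≤ 6 * |σ.2 - η.2| + 2 * |σ.1 + η.1| * |σ.1 - η.1| := by
        refine (abs_sub _ _).trans_eq ?_
        simp only [abs_mul, abs_two, abs_of_pos (by norm_num : (0 : ℝ) < 6)]
    _ ≤ 6 * ‖σ - η‖ + 2 * 20 * ‖σ - η‖ := by gcongr
    _ = 46 * ‖σ - η‖ := by ring

theorem abs_snd_sub_le (hσ : ‖σ‖ ≤ 10) (hη : ‖η‖ ≤ 10) :
    6 * |σ.2 - η.2| ≤ |stmt14Radicand σ - stmt14Radicand η| + 40 * |σ.1 - η.1| := by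
  have hsum : |σ.1 + η.1| ≤ 20 := (abs_add_le _ _).trans
    (by linarith [abs_fst_le_of_norm_le hσ, abs_fst_le_of_norm_le hη])
  have hΔ : 6 * (σ.2 - η.2) =
      (stmt14Radicand σ - stmt14Radicand η) + 2 * (σ.1 + η.1) * (σ.1 - η.1) := by
    rw [stmt14Radicand_sub]; ring
  calc 6 * |σ.2 - η.2| = |6 * (σ.2 - η.2)| := by
        rw [abs_mul, abs_of_pos (by norm_num : (0 : ℝ) < 6)]
    _ ≤ |stmt14Radicand σ - stmt14Radicand η| + 2 * |σ.1 + η.1| * |σ.1 - η.1| := by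
        rw [hΔ]
        refine (abs_add_le _ _).trans_eq ?_
        simp only [abs_mul, abs_two]
    _ ≤ |stmt14Radicand σ - stmt14Radicand η| + 2 * 20 * |σ.1 - η.1| := by gcongr
    _ = |stmt14Radicand σ - stmt14Radicand η| + 40 * |σ.1 - η.1| := by ring

end BallOfRadiusTen

namespace stmt14Omega

variable {θ : ℝ} {σ η : ℝ × ℝ}

theorem norm_le (hσ : σ ∈ stmt14Omega θ) : ‖σ‖ ≤ 10 := by
  have h : σ.1 ^ 2 + σ.2 ^ 2 ≤ 10 ^ 2 := (sqrt_le_left (by norm_num)).1 hσ.1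
  exact max_le (abs_le_of_sq_le_sq (by nlinarith [sq_nonneg σ.2]) (by norm_num))
    (abs_le_of_sq_le_sq (by nlinarith [sq_nonneg σ.1]) (by norm_num))

theorem sq_le_stmt14Radicand (hσ : σ ∈ stmt14Omega θ) : θ ^ 2 ≤ stmt14Radicand σ := hσ.2

theorem stmt14Radicand_nonneg (hσ : σ ∈ stmt14Omega θ) : 0 ≤ stmt14Radicand σ :=
  (sq_nonneg θ).trans hσ.2

theorem stmt14Radicand_le (hσ : σ ∈ stmt14Omega θ) : stmt14Radicand σ ≤ 8 ^ 2 := by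
  have h₂ : σ.2 ≤ 10 := (le_abs_self _).trans (abs_snd_le_of_norm_le (norm_le hσ))
  unfold stmt14Radicand
  nlinarith [sq_nonneg σ.1]

end stmt14Omega

theorem norm_stmt14Psi_sub (σ η : ℝ × ℝ) :
    ‖stmt14Psi σ - stmt14Psi η‖ =
      max (2 * |σ.1 - η.1|) |√(stmt14Radicand σ) - √(stmt14Radicand η)| := by
  rw [Prod.norm_def]
  simp [stmt14Psi, stmt14Radicand, ← mul_sub]

open stmt14Omega in
theorem norm_sub_le_six_mul_norm_stmt14Psi_sub {θ θ' : ℝ} {σ η : ℝ × ℝ}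
    (hσ : σ ∈ stmt14Omega θ) (hη : η ∈ stmt14Omega θ') :
    ‖σ - η‖ ≤ 6 * ‖stmt14Psi σ - stmt14Psi η‖ := by
  set M := ‖stmt14Psi σ - stmt14Psi η‖
  have h₁ : 2 * |σ.1 - η.1| ≤ M := (norm_stmt14Psi_sub σ η).ge.trans' (le_max_left _ _)
  have hsqrt : |√(stmt14Radicand σ) - √(stmt14Radicand η)| ≤ M :=
    (norm_stmt14Psi_sub σ η).ge.trans' (le_max_right _ _)
  have hq : |stmt14Radicand σ - stmt14Radicand η| ≤ 16 * M := by
    refine (abs_sub_le_mul_abs_sqrt_sub_sqrt (R := 8) (by norm_num) (stmt14Radicand_nonneg hσ)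
      (stmt14Radicand_nonneg hη) (stmt14Radicand_le hσ) (stmt14Radicand_le hη)).trans ?_
    linarith
  have h₂ := abs_snd_sub_le (norm_le hσ) (norm_le hη)
  exact max_le (show |σ.1 - η.1| ≤ 6 * M by linarith [abs_nonneg (σ.1 - η.1)])
    (show |σ.2 - η.2| ≤ 6 * M by linarith)

open stmt14Omega in
theorem norm_stmt14Psi_sub_le {θ : ℝ} (hθ : 0 < θ) (hθ₁ : θ ≤ 1) {σ η : ℝ × ℝ}
    (hσ : σ ∈ stmt14Omega θ) (hη : η ∈ stmt14Omega θ) :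
    ‖stmt14Psi σ - stmt14Psi η‖ ≤ 23 * θ⁻¹ * ‖σ - η‖ := by
  have hθinv : 1 ≤ θ⁻¹ := (one_le_inv₀ hθ).2 hθ₁
  have hΔ : 0 ≤ ‖σ - η‖ := norm_nonneg _
  rw [norm_stmt14Psi_sub]
  refine max_le ?_ ?_
  · have h₁ : |σ.1 - η.1| ≤ ‖σ - η‖ := norm_fst_le (σ - η)
    nlinarith
  · calc |√(stmt14Radicand σ) - √(stmt14Radicand η)|
        ≤ |stmt14Radicand σ - stmt14Radicand η| / (2 * θ) :=
          abs_sqrt_sub_sqrt_le hθ (sq_le_stmt14Radicand hσ) (sq_le_stmt14Radicand hη)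
      _ ≤ 46 * ‖σ - η‖ / (2 * θ) := by
          gcongr
          exact abs_stmt14Radicand_sub_le (norm_le hσ) (norm_le hη)
      _ = 23 * θ⁻¹ * ‖σ - η‖ := by field_simp; ring

theorem stmt_14 :
    ∃ c > 0, ∃ C > 0, ∀ θ : ℝ, 0 < θ → θ ≤ 1 →
      ∀ σ ∈ stmt14Omega θ, ∀ η ∈ stmt14Omega θ,
        c * θ * ‖σ - η‖ ≤ ‖stmt14Psi σ - stmt14Psi η‖ ∧
        ‖stmt14Psi σ - stmt14Psi η‖ ≤ C * θ⁻¹ * ‖σ - η‖ := by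
  refine ⟨1 / 6, by norm_num, 23, by norm_num, fun θ hθ hθ₁ σ hσ η hη => ⟨?_,
    norm_stmt14Psi_sub_le hθ hθ₁ hσ hη⟩⟩
  have hlower := norm_sub_le_six_mul_norm_stmt14Psi_sub hσ hη
  nlinarith [norm_nonneg (σ - η)]
end
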